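/- Star lemma for canonical relations: let A, B be atoms of a finite set Γ. If A S_{π*} B (i.e., ⋀A ∧ ⟨t,π*⟩⋀B is consistent), then A (S_π)* B, i.e., B is reachable from A by finitely many steps of the one-step canonical relation S_π. -/

import Mathlib

/-- ReLo formulas: atoms, negation, conjunction, implication, and modalities
⟨t,π⟩ (`dia`) and ⟨t,π*⟩ (`diaStar`); labels coded as naturals. -/
inductive Formula : Type
  | atom : ℕ → Formula
  | neg : Formula → Formula
  | and : Formula → Formula → Formula
  | imp : Formula → Formula → Formula
  | dia : ℕ → ℕ → Formula → Formula
  | diaStar : ℕ → ℕ → Formula → Formula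
deriving DecidableEq

/-- `[t,π]φ ≡ ¬⟨t,π⟩¬φ`. -/
def Formula.box (t π : ℕ) (φ : Formula) : Formula := .neg (.dia t π (.neg φ))

/-- `[t,π*]φ ≡ ¬⟨t,π*⟩¬φ`. -/
def Formula.boxStar (t π : ℕ) (φ : Formula) : Formula := .neg (.diaStar t π (.neg φ))

/-- `φ ↔ ψ` as a formula. -/
def Formula.iff (φ ψ : Formula) : Formula := (φ.imp ψ).and (ψ.imp φ)

/-- Fischer–Ladner closure of a formula (as a finite set). -/
def FL : Formula → Finset Formula
  | .atom p => {.atom p}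
  | .neg φ => insert (.neg φ) (FL φ)
  | .and φ ψ => insert (.and φ ψ) (FL φ ∪ FL ψ)
  | .imp φ ψ => insert (.imp φ ψ) (FL φ ∪ FL ψ)
  | .dia t π φ => insert (.dia t π φ) (FL φ)
  | .diaStar t π φ =>
      insert (.diaStar t π φ) (insert (.dia t π (.diaStar t π φ)) (FL φ))

/-- Fischer–Ladner closure of a finite set of formulas: `FL(Γ) = ⋃_{φ∈Γ} FL(φ)`. -/
def FLs (Γ : Finset Formula) : Finset Formula := Γ.biUnion FL

/-- Conjunction `⋀X` of a finite set of formulas (folded over an enumeration,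
with a trivially true formula as the unit). -/
noncomputable def conj (X : Finset Formula) : Formula :=
  X.toList.foldr Formula.and (Formula.imp (.atom 0) (.atom 0))

/-- Boolean evaluation treating atoms and modal formulas as propositional atoms;
used to express "propositional tautology". -/
def beval (v : Formula → Prop) : Formula → Prop
  | .neg φ => ¬ beval v φ
  | .and φ ψ => beval v φ ∧ beval v ψ
  | .imp φ ψ => beval v φ → beval v ψ
  | φ => v φ

/-- Derivability in the ReLo proof system: propositional tautologies, K, And,
Du, It, Ind, modus ponens and generalization. -/
inductive Deriv : Formula → Prop
  | taut {φ : Formula} : (∀ v : Formula → Prop, beval v φ) → Deriv φ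
  | axK (t π : ℕ) (φ ψ : Formula) :
      Deriv ((Formula.box t π (φ.imp ψ)).imp ((Formula.box t π φ).imp (Formula.box t π ψ)))
  | axAnd (t π : ℕ) (φ ψ : Formula) :
      Deriv ((Formula.box t π (φ.and ψ)).iff ((Formula.box t π φ).and (Formula.box t π ψ)))
  | axDu (t π : ℕ) (φ : Formula) :
      Deriv ((Formula.box t π φ).iff (.neg (.dia t π (.neg φ))))
  | axIt (t t' π : ℕ) (φ : Formula) :
      Deriv ((φ.and (Formula.box t π (Formula.boxStar t' π φ))).iff (Formula.boxStar t π φ))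
  | axInd (t t' π : ℕ) (φ : Formula) :
      Deriv ((φ.and (Formula.boxStar t π (φ.imp (Formula.box t' π φ)))).imp (Formula.boxStar t π φ))
  | mp {φ ψ : Formula} : Deriv (φ.imp ψ) → Deriv φ → Deriv ψ
  | gen {φ : Formula} (t π : ℕ) : Deriv φ → Deriv (Formula.box t π φ)

/-- A finite set of formulas is consistent if the negation of its conjunction
is not derivable. -/
def Consistent (X : Finset Formula) : Prop := ¬ Deriv (Formula.neg (conj X))

/-- An atom of `Γ`: a maximal consistent subset of `FL(Γ)`. -/
def IsReloAtom (Γ : Finset Formula) (A : Finset Formula) : Prop :=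
  A ⊆ FLs Γ ∧ Consistent A ∧ ∀ γ ∈ FLs Γ, γ ∈ A ∨ ¬ Consistent (insert γ A)

/-- Canonical relation: `A S_π B` iff `⋀A ∧ ⟨t,π⟩⋀B` is consistent. -/
def Srel (t π : ℕ) (A B : Finset Formula) : Prop :=
  Consistent {(conj A).and (.dia t π (conj B))}

/-- Canonical star relation: `A S_{π*} B` iff `⋀A ∧ ⟨t,π*⟩⋀B` is consistent. -/
def SrelStar (t π : ℕ) (A B : Finset Formula) : Prop :=
  Consistent {(conj A).and (.diaStar t π (conj B))}

/-- Satisfaction in the canonical model over `γ`: states are the atoms of `{γ}`;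
`⟨t,π⟩` is interpreted by `S_π` and `⟨t,π*⟩` by `S_{π*}`; an atom satisfies an
atomic proposition iff the proposition belongs to it. -/
def satC (γ : Formula) : Finset Formula → Formula → Prop
  | A, .atom p => Formula.atom p ∈ A
  | A, .neg φ => ¬ satC γ A φ
  | A, .and φ ψ => satC γ A φ ∧ satC γ A ψ
  | A, .imp φ ψ => satC γ A φ → satC γ A ψ
  | A, .dia t π φ => ∃ B, IsReloAtom {γ} B ∧ Srel t π A B ∧ satC γ B φ
  | A, .diaStar t π φ => ∃ B, IsReloAtom {γ} B ∧ SrelStar t π A B ∧ satC γ B φ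

/-- Satisfaction in the proper canonical model over `γ`: as `satC`, but `⟨t,π*⟩`
is interpreted by the reflexive–transitive closure of the one-step canonical
relation `S_π` (restricted to atoms). -/
def satP (γ : Formula) : Finset Formula → Formula → Prop
  | A, .atom p => Formula.atom p ∈ A
  | A, .neg φ => ¬ satP γ A φ
  | A, .and φ ψ => satP γ A φ ∧ satP γ A ψ
  | A, .imp φ ψ => satP γ A φ → satP γ A ψ
  | A, .dia t π φ => ∃ B, IsReloAtom {γ} B ∧ Srel t π A B ∧ satP γ B φ
  | A, .diaStar t π φ =>
      ∃ B, IsReloAtom {γ} B ∧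
        Relation.ReflTransGen (fun X Y => IsReloAtom {γ} Y ∧ Srel t π X Y) A B ∧ satP γ B φ


/-! ### Auxiliary machinery for the star lemma -/

/-- Substitution replacing the formula `⟨t,π⟩c` by `⟨t,π*⟩c` everywhere. -/
def fsub (t π : ℕ) (c : Formula) : Formula → Formula
  | .atom p => .atom p
  | .neg φ => .neg (fsub t π c φ)
  | .and φ ψ => .and (fsub t π c φ) (fsub t π c ψ)
  | .imp φ ψ => .imp (fsub t π c φ) (fsub t π c ψ)
  | .dia t' π' φ =>
      if t' = t ∧ π' = π ∧ φ = c then .diaStar t π c else .dia t' π' (fsub t π c φ)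
  | .diaStar t' π' φ => .diaStar t' π' (fsub t π c φ)

lemma fsub_box {t π : ℕ} {c : Formula} (hc : ∀ χ, c ≠ Formula.neg χ)
    (t0 π0 : ℕ) (φ : Formula) :
    fsub t π c (Formula.box t0 π0 φ) = Formula.box t0 π0 (fsub t π c φ) := by
  simp only [Formula.box, fsub]
  rw [if_neg]
  rintro ⟨-, -, h3⟩
  exact hc φ h3.symm

lemma fsub_boxStar {t π : ℕ} {c : Formula} (t0 π0 : ℕ) (φ : Formula) :
    fsub t π c (Formula.boxStar t0 π0 φ) = Formula.boxStar t0 π0 (fsub t π c φ) := rfl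

lemma fsub_neg {t π : ℕ} {c φ : Formula} :
    fsub t π c (Formula.neg φ) = Formula.neg (fsub t π c φ) := rfl

lemma fsub_and {t π : ℕ} {c φ ψ : Formula} :
    fsub t π c (Formula.and φ ψ) = (fsub t π c φ).and (fsub t π c ψ) := rfl

lemma fsub_imp {t π : ℕ} {c φ ψ : Formula} :
    fsub t π c (Formula.imp φ ψ) = (fsub t π c φ).imp (fsub t π c ψ) := rfl

lemma fsub_diaStar' {t π t' π' : ℕ} {c φ : Formula} :
    fsub t π c (Formula.diaStar t' π' φ) = Formula.diaStar t' π' (fsub t π c φ) := rfl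

lemma fsub_dia_neg {t π : ℕ} {c : Formula} (hc : ∀ χ, c ≠ Formula.neg χ)
    (t0 π0 : ℕ) (φ : Formula) :
    fsub t π c (Formula.dia t0 π0 (Formula.neg φ)) =
      Formula.dia t0 π0 (Formula.neg (fsub t π c φ)) := by
  simp only [fsub]
  rw [if_neg]
  rintro ⟨-, -, h3⟩
  exact hc φ h3.symm

lemma beval_fsub {t π : ℕ} {c : Formula} (v : Formula → Prop) (φ : Formula) :
    beval (fun a => beval v (fsub t π c a)) φ ↔ beval v (fsub t π c φ) := by
  induction φ with
  | atom p => rfl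
  | neg φ ih => simp only [beval, fsub]; rw [ih]
  | and φ ψ ih1 ih2 => simp only [beval, fsub]; rw [ih1, ih2]
  | imp φ ψ ih1 ih2 => simp only [beval, fsub]; rw [ih1, ih2]
  | dia t' π' φ ih => rfl
  | diaStar t' π' φ ih => rfl

/-- Substitution preserves derivability (since `c` is not a negation, the
substituted formula `⟨t,π⟩c` never occurs in an axiom except as propositional atom). -/
lemma deriv_fsub {t π : ℕ} {c : Formula} (hc : ∀ χ, c ≠ Formula.neg χ)
    {φ : Formula} (hd : Deriv φ) : Deriv (fsub t π c φ) := by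
  induction hd with
  | @taut φ htaut =>
      apply Deriv.taut
      intro v
      have := htaut (fun a => beval v (fsub t π c a))
      rwa [beval_fsub] at this
  | axK t0 π0 φ ψ =>
      have := Deriv.axK t0 π0 (fsub t π c φ) (fsub t π c ψ)
      simpa only [Formula.iff, Formula.box, Formula.boxStar, fsub_neg, fsub_and,
        fsub_imp, fsub_diaStar', fsub_dia_neg hc] using this
  | axAnd t0 π0 φ ψ =>
      have := Deriv.axAnd t0 π0 (fsub t π c φ) (fsub t π c ψ)
      simpa only [Formula.iff, Formula.box, Formula.boxStar, fsub_neg, fsub_and,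
        fsub_imp, fsub_diaStar', fsub_dia_neg hc] using this
  | axDu t0 π0 φ =>
      have := Deriv.axDu t0 π0 (fsub t π c φ)
      simpa only [Formula.iff, Formula.box, Formula.boxStar, fsub_neg, fsub_and,
        fsub_imp, fsub_diaStar', fsub_dia_neg hc] using this
  | axIt t0 t1 π0 φ =>
      have := Deriv.axIt t0 t1 π0 (fsub t π c φ)
      simpa only [Formula.iff, Formula.box, Formula.boxStar, fsub_neg, fsub_and,
        fsub_imp, fsub_diaStar', fsub_dia_neg hc] using this
  | axInd t0 t1 π0 φ =>
      have := Deriv.axInd t0 t1 π0 (fsub t π c φ)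
      simpa only [Formula.iff, Formula.box, Formula.boxStar, fsub_neg, fsub_and,
        fsub_imp, fsub_diaStar', fsub_dia_neg hc] using this
  | @mp φ ψ h1 h2 ih1 ih2 =>
      exact Deriv.mp (by simpa only [fsub_imp] using ih1) ih2
  | @gen φ t0 π0 hφ ih =>
      have := Deriv.gen t0 π0 ih
      rwa [← fsub_box hc] at this

/-- `p` occurs as a subformula of `φ`. -/
def Occ (p : Formula) : Formula → Prop
  | .atom q => p = .atom q
  | .neg φ => p = .neg φ ∨ Occ p φ
  | .and φ ψ => p = .and φ ψ ∨ Occ p φ ∨ Occ p ψ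
  | .imp φ ψ => p = .imp φ ψ ∨ Occ p φ ∨ Occ p ψ
  | .dia t' π' φ => p = .dia t' π' φ ∨ Occ p φ
  | .diaStar t' π' φ => p = .diaStar t' π' φ ∨ Occ p φ

lemma occ_refl (p : Formula) : Occ p p := by
  cases p <;> simp [Occ]

lemma fsub_fix {t π : ℕ} {c : Formula} {φ : Formula}
    (h : ¬ Occ (.dia t π c) φ) : fsub t π c φ = φ := by
  induction φ with
  | atom p => rfl
  | neg φ ih => simp only [Occ, not_or] at h; simp [fsub, ih h.2]
  | and φ ψ ih1 ih2 => simp only [Occ, not_or] at h; simp [fsub, ih1 h.2.1, ih2 h.2.2]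
  | imp φ ψ ih1 ih2 => simp only [Occ, not_or] at h; simp [fsub, ih1 h.2.1, ih2 h.2.2]
  | dia t' π' φ ih =>
      simp only [Occ, not_or] at h
      have hcond : ¬ (t' = t ∧ π' = π ∧ φ = c) := by
        rintro ⟨rfl, rfl, rfl⟩; exact h.1 rfl
      simp [fsub, if_neg hcond, ih h.2]
  | diaStar t' π' φ ih => simp only [Occ, not_or] at h; simp [fsub, ih h.2]

lemma occ_trans {q p r : Formula} (h1 : Occ q p) (h2 : Occ p r) : Occ q r := by
  induction r with
  | atom s => rw [show p = Formula.atom s from h2] at h1; exact h1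
  | neg φ ih =>
      rcases h2 with rfl | h2
      · exact h1
      · exact Or.inr (ih h2)
  | and φ ψ ih1 ih2 =>
      rcases h2 with rfl | h2 | h2
      · exact h1
      · exact Or.inr (Or.inl (ih1 h2))
      · exact Or.inr (Or.inr (ih2 h2))
  | imp φ ψ ih1 ih2 =>
      rcases h2 with rfl | h2 | h2
      · exact h1
      · exact Or.inr (Or.inl (ih1 h2))
      · exact Or.inr (Or.inr (ih2 h2))
  | dia t' π' φ ih =>
      rcases h2 with rfl | h2
      · exact h1
      · exact Or.inr (ih h2)
  | diaStar t' π' φ ih =>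
      rcases h2 with rfl | h2
      · exact h1
      · exact Or.inr (ih h2)

lemma mem_FL_self (φ : Formula) : φ ∈ FL φ := by
  cases φ <;> simp [FL]

lemma occ_mem_FL {q γ : Formula} (h : Occ q γ) : q ∈ FL γ := by
  induction γ with
  | atom p => rw [h]; exact mem_FL_self _
  | neg φ ih =>
      rcases h with rfl | h
      · exact mem_FL_self _
      · simp only [FL, Finset.mem_insert]; exact Or.inr (ih h)
  | and φ ψ ih1 ih2 =>
      rcases h with rfl | h | h
      · exact mem_FL_self _
      · simp only [FL, Finset.mem_insert, Finset.mem_union]; exact Or.inr (Or.inl (ih1 h))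
      · simp only [FL, Finset.mem_insert, Finset.mem_union]; exact Or.inr (Or.inr (ih2 h))
  | imp φ ψ ih1 ih2 =>
      rcases h with rfl | h | h
      · exact mem_FL_self _
      · simp only [FL, Finset.mem_insert, Finset.mem_union]; exact Or.inr (Or.inl (ih1 h))
      · simp only [FL, Finset.mem_insert, Finset.mem_union]; exact Or.inr (Or.inr (ih2 h))
  | dia t' π' φ ih =>
      rcases h with rfl | h
      · exact mem_FL_self _
      · simp only [FL, Finset.mem_insert]; exact Or.inr (ih h)
  | diaStar t' π' φ ih =>
      rcases h with rfl | h
      · exact mem_FL_self _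
      · simp only [FL, Finset.mem_insert]; exact Or.inr (Or.inr (ih h))

/-- Anything in the Fischer–Ladner closure of `γ` either has all its occurrences
inside `γ`, or is one of the generated formulas `⟨t0,π0⟩⟨t0,π0*⟩ψ`. -/
lemma occ_of_mem_FL {γ x p : Formula} (hx : x ∈ FL γ) (hp : Occ p x) :
    Occ p γ ∨ ∃ t0 π0 ψ, p = Formula.dia t0 π0 (.diaStar t0 π0 ψ) := by
  induction γ with
  | atom q =>
      simp only [FL, Finset.mem_singleton] at hx
      subst hx; exact Or.inl hp
  | neg φ ih =>
      simp only [FL, Finset.mem_insert] at hx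
      rcases hx with rfl | hx
      · exact Or.inl hp
      · rcases ih hx with h | h
        · exact Or.inl (Or.inr h)
        · exact Or.inr h
  | and φ ψ ih1 ih2 =>
      simp only [FL, Finset.mem_insert, Finset.mem_union] at hx
      rcases hx with rfl | hx | hx
      · exact Or.inl hp
      · rcases ih1 hx with h | h
        · exact Or.inl (Or.inr (Or.inl h))
        · exact Or.inr h
      · rcases ih2 hx with h | h
        · exact Or.inl (Or.inr (Or.inr h))
        · exact Or.inr h
  | imp φ ψ ih1 ih2 =>
      simp only [FL, Finset.mem_insert, Finset.mem_union] at hx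
      rcases hx with rfl | hx | hx
      · exact Or.inl hp
      · rcases ih1 hx with h | h
        · exact Or.inl (Or.inr (Or.inl h))
        · exact Or.inr h
      · rcases ih2 hx with h | h
        · exact Or.inl (Or.inr (Or.inr h))
        · exact Or.inr h
  | dia t' π' φ ih =>
      simp only [FL, Finset.mem_insert] at hx
      rcases hx with rfl | hx
      · exact Or.inl hp
      · rcases ih hx with h | h
        · exact Or.inl (Or.inr h)
        · exact Or.inr h
  | diaStar t' π' φ ih =>
      simp only [FL, Finset.mem_insert] at hx
      rcases hx with rfl | rfl | hx
      · exact Or.inl hp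
      · rcases hp with rfl | hp
        · exact Or.inr ⟨t', π', φ, rfl⟩
        · rcases hp with rfl | hp
          · exact Or.inl (occ_refl _)
          · exact Or.inl (Or.inr hp)
      · rcases ih hx with h | h
        · exact Or.inl (Or.inr h)
        · exact Or.inr h

lemma beval_foldr (v : Formula → Prop) (u : Formula) (L : List Formula) :
    beval v (L.foldr Formula.and u) ↔ (∀ y ∈ L, beval v y) ∧ beval v u := by
  induction L with
  | nil => simp
  | cons a l ih =>
      simp only [List.foldr_cons, beval, ih, List.mem_cons]
      constructor
      · rintro ⟨ha, hl, hu⟩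
        exact ⟨fun y hy => by rcases hy with rfl | hy; exact ha; exact hl y hy, hu⟩
      · rintro ⟨hall, hu⟩
        exact ⟨hall a (Or.inl rfl), fun y hy => hall y (Or.inr hy), hu⟩

lemma beval_conj (v : Formula → Prop) (X : Finset Formula) :
    beval v (conj X) ↔ ∀ y ∈ X, beval v y := by
  rw [conj, beval_foldr]
  simp only [Finset.mem_toList]
  constructor
  · exact fun h => h.1
  · intro h
    exact ⟨h, by simp [beval]⟩

lemma conj_ne_neg (X : Finset Formula) : ∀ χ, conj X ≠ Formula.neg χ := by
  intro χ
  rw [conj]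
  cases X.toList with
  | nil => simp
  | cons a l => simp

lemma conj_ne_diaStar (X : Finset Formula) :
    ∀ t0 π0 χ, conj X ≠ Formula.diaStar t0 π0 χ := by
  intro t0 π0 χ
  rw [conj]
  cases X.toList with
  | nil => simp
  | cons a l => simp

lemma sizeOf_lt_foldr {x : Formula} {L : List Formula} (hx : x ∈ L) (u : Formula) :
    sizeOf x < sizeOf (L.foldr Formula.and u) := by
  induction L with
  | nil => cases hx
  | cons a l ih =>
      simp only [List.foldr_cons]
      rcases List.mem_cons.mp hx with rfl | hx
      · simp only [Formula.and.sizeOf_spec]; omega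
      · have := ih hx
        simp only [Formula.and.sizeOf_spec]; omega

/-- If `B` is an atom of `Γ`, then `⋀B` itself is not in `FL(Γ)`. -/
lemma conjB_not_mem_FLs {Γ B : Finset Formula} (hB : IsReloAtom Γ B) :
    conj B ∉ FLs Γ := by
  intro hmem
  rcases hB.2.2 (conj B) hmem with hin | hincons
  · -- size contradiction
    have hx : conj B ∈ B.toList := Finset.mem_toList.mpr hin
    have := sizeOf_lt_foldr hx (Formula.imp (.atom 0) (.atom 0))
    rw [← conj] at this
    omega
  · -- inconsistency of `insert (conj B) B` yields inconsistency of `B`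
    apply hB.2.1
    unfold Consistent at hincons
    push_neg at hincons
    refine Deriv.mp (Deriv.taut ?_) hincons
    intro v
    show beval v (Formula.neg (conj (insert (conj B) B))) → beval v (Formula.neg (conj B))
    simp only [beval, beval_conj, Finset.mem_insert]
    intro hni hall
    apply hni
    intro y hy
    rcases hy with rfl | hy
    · rw [beval_conj]; exact hall
    · exact hall y hy

/-- `⟨t,π⟩⋀B` does not occur in any member of `FL(Γ)` when `B` is an atom of `Γ`. -/
lemma no_occ_diaConjB {Γ B : Finset Formula} (hB : IsReloAtom Γ B) (t π : ℕ)
    {a : Formula} (ha : a ∈ FLs Γ) : ¬ Occ (.dia t π (conj B)) a := by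
  intro hocc
  rcases Finset.mem_biUnion.mp ha with ⟨γ, hγ, haγ⟩
  rcases occ_of_mem_FL haγ hocc with h | ⟨t0, π0, ψ, heq⟩
  · have h2 : Occ (conj B) γ :=
      occ_trans (q := conj B) (p := Formula.dia t π (conj B))
        (Or.inr (occ_refl _)) h
    have : conj B ∈ FL γ := occ_mem_FL h2
    exact conjB_not_mem_FLs hB (Finset.mem_biUnion.mpr ⟨γ, hγ, this⟩)
  · injection heq with e1 e2 e3
    exact conj_ne_diaStar B t0 π0 ψ e3

lemma fsub_conjA {Γ A B : Finset Formula} (hA : IsReloAtom Γ A)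
    (hB : IsReloAtom Γ B) (t π : ℕ) :
    fsub t π (conj B) (conj A) = conj A := by
  apply fsub_fix
  intro hocc
  -- show `⟨t,π⟩⋀B` must occur in some element of `A`
  rw [conj] at hocc
  have key : ∀ L : List Formula, Occ (Formula.dia t π (conj B)) (L.foldr Formula.and
      (Formula.imp (.atom 0) (.atom 0))) → ∃ a ∈ L, Occ (Formula.dia t π (conj B)) a := by
    intro L
    induction L with
    | nil => intro h; rcases h with h | h | h <;> simp_all [Occ]
    | cons a l ih =>
        intro h
        rcases h with h | h | h
        · cases h
        · exact ⟨a, List.mem_cons_self, h⟩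
        · rcases ih h with ⟨b, hb1, hb2⟩
          exact ⟨b, List.mem_cons_of_mem a hb1, hb2⟩
  rcases key A.toList hocc with ⟨a, ha, hocca⟩
  exact no_occ_diaConjB hB t π (hA.1 (Finset.mem_toList.mp ha)) hocca

lemma conj_singleton (x : Formula) :
    conj {x} = x.and (Formula.imp (.atom 0) (.atom 0)) := by
  rw [conj, Finset.toList_singleton, List.foldr_cons, List.foldr_nil]

/-- Star lemma for canonical relations: `S_{π*}` on atoms is contained in the
reflexive–transitive closure of the one-step canonical relation `S_π` (stepping
through atoms). -/
theorem star_lemma_canonical (Γ : Finset Formula) (t π : ℕ)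
    (A B : Finset Formula) (hA : IsReloAtom Γ A) (hB : IsReloAtom Γ B)
    (h : SrelStar t π A B) :
    Relation.ReflTransGen (fun X Y => IsReloAtom Γ Y ∧ Srel t π X Y) A B := by
  refine Relation.ReflTransGen.single ⟨hB, ?_⟩
  intro hd
  apply h
  have hsub := deriv_fsub (t := t) (π := π) (c := conj B) (conj_ne_neg B) hd
  rw [conj_singleton] at hsub ⊢
  simpa only [fsub, fsub_conjA hA hB,
    if_pos (⟨rfl, rfl, rfl⟩ : t = t ∧ π = π ∧ conj B = conj B), and_self, if_true] using hsub
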